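/- Let N ≥ 1 be an integer, h = 1/N, ω ∈ ℝ with ω ≠ 0, and define complex coefficients C₀ = (1 + e^{2h} + 2πiω(e^{2h} − 1) − 2e^{(2πiω+1)h}) / ((e^{2h} − 1)(4π²ω² + 1)), C_β = 2(1 + e^{2h} − 2e^{h}cos(2πωh)) / ((e^{2h} − 1)(4π²ω² + 1)) · e^{2πiωhβ} for 1 ≤ β ≤ N−1, and C_N = e^{2πiω}(1 + e^{2h} − 2πiω(e^{2h} − 1) − 2e^{(1−2πiω)h}) / ((e^{2h} − 1)(4π²ω² + 1)). Then ∑_{β=0}^{N} C_β · e^{−hβ} = (e^{2πiω−1} − 1)/(2πiω − 1). -/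

import Mathlib

set_option maxHeartbeats 1000000 in
lemma key_rat (a b s A B : ℂ) (ha : a ≠ 0) (hb : b ≠ 0) (hA : A ≠ 0) (hB : B ≠ 0)
    (h2 : b ^ 2 - 1 ≠ 0) (h3 : 1 - s ^ 2 ≠ 0) (h4 : s - 1 ≠ 0) (h5 : a * b⁻¹ - 1 ≠ 0) :
    (2 * (1 + b ^ 2) - 2 * b * (a + a⁻¹)) / ((b ^ 2 - 1) * (1 - s ^ 2)) *
        (a * b⁻¹ * ((A * B⁻¹ - 1) / (a * b⁻¹ - 1)))
      + (1 + b ^ 2 + s * (b ^ 2 - 1) - 2 * (a * b)) / ((b ^ 2 - 1) * (1 - s ^ 2)) * 1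
      + A * a * (1 + b ^ 2 - s * (b ^ 2 - 1) - 2 * (b * a⁻¹)) / ((b ^ 2 - 1) * (1 - s ^ 2)) * (B * b)⁻¹
      = (A * a * (B * b)⁻¹ - 1) / (s - 1) := by
  have h6 : a - b ≠ 0 := by
    intro h0
    apply h5
    rw [sub_eq_zero] at h0 ⊢
    rw [h0, mul_inv_cancel₀ hb]
  have h5' : a * b⁻¹ - 1 ≠ 0 := h5
  have hfac : a * b⁻¹ * ((A * B⁻¹ - 1) / (a * b⁻¹ - 1)) = a * (A - B) / (B * (a - b)) := by
    rw [eq_div_iff (mul_ne_zero hB h6), mul_assoc, div_mul_eq_mul_div,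
      mul_comm (a * b⁻¹), div_mul_eq_mul_div, div_eq_iff h5']
    field_simp
  rw [hfac]
  field_simp
  have hD1 : a * ((b ^ 2 - 1) * (1 - s ^ 2)) * (B * (a - b)) * ((b ^ 2 - 1) * (1 - s ^ 2)) ≠ 0 :=
    mul_ne_zero (mul_ne_zero (mul_ne_zero ha (mul_ne_zero h2 h3)) (mul_ne_zero hB h6))
      (mul_ne_zero h2 h3)
  ring


/-- The optimal quadrature coefficients of Theorem 3 (for the space W₂^{(1,0)}[0,1]),
with `h = 1/N`. -/
noncomputable def Copt (N : ℕ) (ω : ℝ) (β : ℕ) : ℂ :=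
  let h : ℝ := 1 / N
  let tω : ℂ := 2 * (Real.pi : ℂ) * Complex.I * ω
  let den : ℂ := ((Real.exp (2 * h) - 1 : ℝ) : ℂ) *
    ((4 * Real.pi ^ 2 * ω ^ 2 + 1 : ℝ) : ℂ)
  if β = 0 then
    (1 + (Real.exp (2 * h) : ℂ) + tω * ((Real.exp (2 * h) : ℂ) - 1)
      - 2 * Complex.exp ((tω + 1) * h)) / den
  else if β = N then
    Complex.exp tω * (1 + (Real.exp (2 * h) : ℂ) - tω * ((Real.exp (2 * h) : ℂ) - 1)
      - 2 * Complex.exp ((1 - tω) * h)) / den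
  else
    ((2 * (1 + Real.exp (2 * h) - 2 * Real.exp h * Real.cos (2 * Real.pi * ω * h)) : ℝ) : ℂ)
      / den * Complex.exp (tω * h * β)

set_option maxHeartbeats 2000000 in
theorem optimal_exact_exp_neg (N : ℕ) (hN : 1 ≤ N) (ω : ℝ) (hω : ω ≠ 0) :
    ∑ β ∈ Finset.range (N + 1), Copt N ω β * Complex.exp (-((1 / N : ℝ) * β : ℝ))
      = (Complex.exp (2 * (Real.pi : ℂ) * Complex.I * ω - 1) - 1)
          / (2 * (Real.pi : ℂ) * Complex.I * ω - 1) := by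
  obtain ⟨M, rfl⟩ : ∃ M, N = M + 1 := ⟨N - 1, (Nat.succ_pred_eq_of_pos hN).symm⟩
  set n : ℕ := M + 1 with hn
  have hnR : (n : ℝ) ≠ 0 := Nat.cast_ne_zero.2 (Nat.succ_ne_zero M)
  have hnC : (n : ℂ) ≠ 0 := Nat.cast_ne_zero.2 (Nat.succ_ne_zero M)
  set h : ℝ := 1 / (n : ℝ) with hhdef
  have hhpos : 0 < h := by positivity
  have hnh : (n : ℂ) * (h : ℂ) = 1 := by
    rw [hhdef]; push_cast; rw [mul_one_div, div_self]; · push_cast at hnC; exact hnC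
  set s : ℂ := 2 * (Real.pi : ℂ) * Complex.I * ω with hs
  set b : ℂ := Complex.exp (h : ℂ) with hbdef
  set a : ℂ := Complex.exp (s * (h : ℂ)) with hadef
  -- exp rewrites
  have hb2 : ((Real.exp (2 * h) : ℝ) : ℂ) = b ^ 2 := by
    rw [hbdef, Complex.ofReal_exp, ← Complex.exp_nat_mul]
    push_cast; ring_nf
  have hb1 : ((Real.exp h : ℝ) : ℂ) = b := by rw [hbdef, Complex.ofReal_exp]
  have hab : Complex.exp ((s + 1) * (h : ℂ)) = a * b := by
    rw [hadef, hbdef, ← Complex.exp_add]; ring_nf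
  have hba : Complex.exp ((1 - s) * (h : ℂ)) = b * a⁻¹ := by
    rw [hadef, hbdef, ← Complex.exp_neg, ← Complex.exp_add]; ring_nf
  have hcos : ((Real.cos (2 * Real.pi * ω * h) : ℝ) : ℂ) = (a + a⁻¹) / 2 := by
    have harg : ((2 * Real.pi * ω * h : ℝ) : ℂ) * Complex.I = s * h := by
      rw [hs]; push_cast; ring
    rw [Complex.ofReal_cos, Complex.cos, neg_mul, harg, ← Complex.exp_neg, ← hadef]
  have han : Complex.exp s = a ^ n := by
    rw [hadef, ← Complex.exp_nat_mul]
    congr 1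
    rw [mul_comm (s) ((h:ℂ)), ← mul_assoc, hnh, one_mul]
  have hbn : Complex.exp (1 : ℂ) = b ^ n := by
    rw [hbdef, ← Complex.exp_nat_mul, hnh]
  have hrhs : Complex.exp (s - 1) = a ^ n * (b ^ n)⁻¹ := by
    rw [sub_eq_add_neg, Complex.exp_add, han, Complex.exp_neg, hbn]
  have hden2 : ((4 * Real.pi ^ 2 * ω ^ 2 + 1 : ℝ) : ℂ) = 1 - s ^ 2 := by
    rw [hs]; push_cast; ring_nf
    rw [Complex.I_sq]; ring
  -- nonzero facts
  have hane : a ≠ 0 := Complex.exp_ne_zero _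
  have hbne : b ≠ 0 := Complex.exp_ne_zero _
  have h1lt : (1 : ℝ) < Real.exp (2 * h) := by
    rw [← Real.exp_zero]; exact Real.exp_lt_exp.2 (by positivity)
  have hb2ne : b ^ 2 - 1 ≠ 0 := by
    rw [← hb2]
    exact sub_ne_zero.2 (by exact_mod_cast ne_of_gt h1lt)
  have hsne : 1 - s ^ 2 ≠ 0 := by
    rw [← hden2]
    exact_mod_cast ne_of_gt (by positivity : (0:ℝ) < 4 * Real.pi ^ 2 * ω ^ 2 + 1)
  have hs1 : s - 1 ≠ 0 := by
    refine sub_ne_zero.2 fun h0 => ?_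
    have := congrArg Complex.re h0
    simp [hs] at this
  set r : ℂ := Complex.exp ((s - 1) * (h : ℂ)) with hrdef
  have hrab : r = a * b⁻¹ := by
    rw [hrdef, hadef, hbdef, ← Complex.exp_neg, ← Complex.exp_add]; ring_nf
  have hrne1 : r ≠ 1 := by
    have habs : ‖r‖ < 1 := by
      rw [Complex.norm_exp]
      rw [← Real.exp_zero]
      apply Real.exp_lt_exp.2
      have : ((s - 1) * (h : ℂ)).re = -h := by
        simp [hs, Complex.mul_re, Complex.mul_im]
      rw [this]; linarith
    intro h0; rw [h0] at habs; simp at habs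
  have hrm1 : r - 1 ≠ 0 := sub_ne_zero.2 hrne1
  -- evaluate the pieces
  have hC0 : Copt n ω 0 = (1 + b ^ 2 + s * (b ^ 2 - 1) - 2 * (a * b)) /
      ((b ^ 2 - 1) * (1 - s ^ 2)) := by
    simp only [Copt, if_pos rfl]
    rw [← hhdef, ← hs, hb2, hab, hden2]
    push_cast [hb2]
    ring
  have hCN : Copt n ω n = a ^ n * (1 + b ^ 2 - s * (b ^ 2 - 1) - 2 * (b * a⁻¹)) /
      ((b ^ 2 - 1) * (1 - s ^ 2)) := by
    simp only [Copt, if_neg (Nat.succ_ne_zero M), if_pos rfl]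
    rw [← hhdef, ← hs, hb2, hba, hden2, han]
    push_cast [hb2]
    ring
  have hmid : ∀ k ∈ Finset.range M, Copt n ω (k + 1) * Complex.exp (-((h * ((k+1 : ℕ) : ℝ) : ℝ) : ℂ))
      = (2 * (1 + b ^ 2) - 2 * b * (a + a⁻¹)) / ((b ^ 2 - 1) * (1 - s ^ 2)) * r ^ (k + 1) := by
    intro k hk
    have hk1 : k + 1 ≠ n := by have := Finset.mem_range.1 hk; omega
    have hpow : Complex.exp (s * (h : ℂ) * ((k+1 : ℕ) : ℂ)) * Complex.exp (-((h * ((k+1 : ℕ) : ℝ) : ℝ) : ℂ))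
        = r ^ (k + 1) := by
      rw [hrdef, ← Complex.exp_nat_mul, ← Complex.exp_add]
      congr 1
      push_cast
      ring
    simp only [Copt, if_neg (Nat.succ_ne_zero k), if_neg hk1]
    rw [← hhdef, ← hs, hden2, mul_assoc, hpow]
    congr 1
    push_cast [hb2, hb1, hcos]
    ring
  rw [Finset.sum_range_succ, Finset.sum_range_succ', Finset.sum_congr rfl hmid]
  have hgeom : ∑ k ∈ Finset.range M,
      (2 * (1 + b ^ 2) - 2 * b * (a + a⁻¹)) / ((b ^ 2 - 1) * (1 - s ^ 2)) * r ^ (k + 1)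
      = (2 * (1 + b ^ 2) - 2 * b * (a + a⁻¹)) / ((b ^ 2 - 1) * (1 - s ^ 2))
        * (r * ((r ^ M - 1) / (r - 1))) := by
    rw [← Finset.mul_sum]
    congr 1
    rw [← geom_sum_eq hrne1 M, Finset.mul_sum]
    exact Finset.sum_congr rfl fun i _ => by ring
  have he0 : Complex.exp (-((h * ((0 : ℕ) : ℝ) : ℝ) : ℂ)) = 1 := by
    push_cast; simp
  have hen : Complex.exp (-((h * ((n : ℕ) : ℝ) : ℝ) : ℂ)) = (b ^ n)⁻¹ := by
    have hhn : h * (n : ℝ) = 1 := by rw [hhdef]; field_simp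
    rw [hhn, Complex.ofReal_one, Complex.exp_neg, hbn]
  rw [hgeom, he0, hen, hC0, hCN, hrhs, hrab]
  have hab1 : a * b⁻¹ - 1 ≠ 0 := by rw [← hrab]; exact hrm1
  clear_value r a b s h n
  rw [hn, pow_succ a M, pow_succ b M,
    show (a * b⁻¹) ^ M = a ^ M * (b ^ M)⁻¹ by rw [mul_pow, inv_pow]]
  exact key_rat a b s (a ^ M) (b ^ M) hane hbne (pow_ne_zero M hane) (pow_ne_zero M hbne)
    hb2ne hsne hs1 hab1
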